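/- arXiv:math/0411553 — 3 statements merged into one kernel-verified Lean document; each statement's English description precedes it below -/
import Mathlib

section
/- Let Γ be a sub-semigroup of GL(d,ℝ) that is strongly irreducible and contains a proximal element. If Γ is unbounded, then every nonzero vector v ∈ ℝ^d has unbounded Γ-orbit. (Equivalently: the subspace W of vectors with bounded Γ-orbit is Γ-invariant, hence by strong irreducibility W = {0} or W = V, and W = V would force Γ bounded.) -/
open Matrix

def HasCEig (d : ℕ) (γ : Matrix (Fin d) (Fin d) ℝ) (μ : ℂ) : Prop :=
  ∃ w : Fin d → ℂ, w ≠ 0 ∧ (γ.map (fun r : ℝ => (r : ℂ))).mulVec w = μ • w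

/-- A proximal matrix: it has a real eigenvalue `lam` whose modulus strictly dominates
the modulus of every other (complex) eigenvalue. -/
def IsProximal (d : ℕ) (γ : Matrix (Fin d) (Fin d) ℝ) : Prop :=
  ∃ (lam : ℝ) (v : Fin d → ℝ), v ≠ 0 ∧ γ.mulVec v = lam • v ∧
    ∀ μ : ℂ, HasCEig d γ μ → μ ≠ (lam : ℂ) → ‖μ‖ < |lam|

def StronglyIrred (d : ℕ) (Γ : Set (Matrix (Fin d) (Fin d) ℝ)) : Prop :=
  ¬ ∃ (n : ℕ) (W : Fin (n + 1) → Submodule ℝ (Fin d → ℝ)),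
      (∀ i, W i ≠ ⊥) ∧ (∀ i, W i ≠ ⊤) ∧
      ∀ γ ∈ Γ, ∀ v ∈ ⋃ i, (W i : Set (Fin d → ℝ)),
        γ.mulVec v ∈ ⋃ i, (W i : Set (Fin d → ℝ))

noncomputable def opn (d : ℕ) (g : Matrix (Fin d) (Fin d) ℝ) : ℝ :=
  ‖Matrix.toEuclideanCLM (𝕜 := ℝ) g‖

/-! The vectors with bounded `Γ`-orbit form a `Γ`-invariant subspace `W`, so strong
irreducibility forces `W = 0` or `W = ℝ^d`. In the second case every orbit is bounded, and the
uniform boundedness principle bounds the operator norms on `Γ`. -/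

section BoundedOrbit

variable {n : Type*} [Fintype n] (Γ : Set (Matrix n n ℝ))

def boundedOrbitSubmodule : Submodule ℝ (n → ℝ) where
  carrier := {x | ∃ C : ℝ, ∀ γ ∈ Γ, ‖γ *ᵥ x‖ ≤ C}
  add_mem' := by
    rintro a b ⟨Ca, ha⟩ ⟨Cb, hb⟩
    refine ⟨Ca + Cb, fun γ hγ => ?_⟩
    rw [mulVec_add]
    exact (norm_add_le _ _).trans (add_le_add (ha γ hγ) (hb γ hγ))
  zero_mem' := ⟨0, fun γ _ => by simp⟩
  smul_mem' := by
    rintro c a ⟨Ca, ha⟩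
    refine ⟨|c| * Ca, fun γ hγ => ?_⟩
    rw [mulVec_smul, norm_smul, Real.norm_eq_abs]
    exact mul_le_mul_of_nonneg_left (ha γ hγ) (abs_nonneg c)

variable {Γ}

theorem mem_boundedOrbitSubmodule {x : n → ℝ} :
    x ∈ boundedOrbitSubmodule Γ ↔ ∃ C : ℝ, ∀ γ ∈ Γ, ‖γ *ᵥ x‖ ≤ C :=
  Iff.rfl

theorem mulVec_mem_boundedOrbitSubmodule (hmul : ∀ a ∈ Γ, ∀ b ∈ Γ, a * b ∈ Γ)
    {γ : Matrix n n ℝ} (hγ : γ ∈ Γ) {x : n → ℝ} (hx : x ∈ boundedOrbitSubmodule Γ) :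
    γ *ᵥ x ∈ boundedOrbitSubmodule Γ := by
  obtain ⟨C, hC⟩ := hx
  exact ⟨C, fun g hg => by rw [mulVec_mulVec]; exact hC _ (hmul g hg γ hγ)⟩

end BoundedOrbit

theorem exists_opn_le_of_boundedOrbitSubmodule_eq_top {d : ℕ} {Γ : Set (Matrix (Fin d) (Fin d) ℝ)}
    (h : boundedOrbitSubmodule Γ = ⊤) : ∃ C : ℝ, ∀ g ∈ Γ, opn d g ≤ C := by
  let e := (EuclideanSpace.equiv (Fin d) ℝ).symm.toContinuousLinearMap
  have hpointwise : ∀ x : EuclideanSpace ℝ (Fin d), ∃ C : ℝ,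
      ∀ γ : Γ, ‖toEuclideanCLM (𝕜 := ℝ) (γ : Matrix (Fin d) (Fin d) ℝ) x‖ ≤ C := by
    intro x
    obtain ⟨C, hC⟩ := mem_boundedOrbitSubmodule.mp (h ▸ Submodule.mem_top (x := WithLp.ofLp x))
    refine ⟨‖e‖ * C, fun γ => ?_⟩
    calc ‖toEuclideanCLM (𝕜 := ℝ) (γ : Matrix (Fin d) (Fin d) ℝ) x‖
        = ‖e ((γ : Matrix (Fin d) (Fin d) ℝ) *ᵥ WithLp.ofLp x)‖ := rfl
      _ ≤ ‖e‖ * ‖(γ : Matrix (Fin d) (Fin d) ℝ) *ᵥ WithLp.ofLp x‖ := e.le_opNorm _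
      _ ≤ ‖e‖ * C := by gcongr; exact hC γ γ.2
  obtain ⟨C, hC⟩ := banach_steinhaus hpointwise
  exact ⟨C, fun g hg => hC ⟨g, hg⟩⟩

theorem StronglyIrred.eq_bot_or_eq_top {d : ℕ} {Γ : Set (Matrix (Fin d) (Fin d) ℝ)}
    (hirr : StronglyIrred d Γ) {W : Submodule ℝ (Fin d → ℝ)}
    (hW : ∀ γ ∈ Γ, ∀ x ∈ W, γ *ᵥ x ∈ W) : W = ⊥ ∨ W = ⊤ := by
  by_contra! hne
  refine hirr ⟨0, fun _ => W, fun _ => hne.1, fun _ => hne.2, fun γ hγ x hx => ?_⟩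
  simp only [Set.mem_iUnion, SetLike.mem_coe, exists_const] at hx ⊢
  exact hW γ hγ x hx

theorem stmt2_general (d : ℕ) (Γ : Set (Matrix (Fin d) (Fin d) ℝ))
    (hmul : ∀ a ∈ Γ, ∀ b ∈ Γ, a * b ∈ Γ)
    (hirr : StronglyIrred d Γ)
    (hunb : ¬ ∃ C : ℝ, ∀ g ∈ Γ, opn d g ≤ C) :
    ∀ v : Fin d → ℝ, v ≠ 0 →
      ¬ ∃ C : ℝ, ∀ γ ∈ Γ, ‖γ.mulVec v‖ ≤ C := by
  intro v hv hbdd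
  have hvW : v ∈ boundedOrbitSubmodule Γ := hbdd
  rcases hirr.eq_bot_or_eq_top (fun γ hγ x hx => mulVec_mem_boundedOrbitSubmodule hmul hγ hx)
    with hbot | htop
  · exact hv ((Submodule.mem_bot ℝ).mp (hbot ▸ hvW))
  · exact hunb (exists_opn_le_of_boundedOrbitSubmodule_eq_top htop)

/-- If a strongly irreducible sub-semigroup `Γ ⊆ GL(d,ℝ)` containing a proximal element
is unbounded, then every nonzero vector has unbounded `Γ`-orbit. -/
theorem stmt2 (d : ℕ) (Γ : Set (Matrix (Fin d) (Fin d) ℝ))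
    (hmul : ∀ a ∈ Γ, ∀ b ∈ Γ, a * b ∈ Γ)
    (hunit : ∀ g ∈ Γ, IsUnit g)
    (hirr : StronglyIrred d Γ)
    (hprox : ∃ γ ∈ Γ, IsProximal d γ)
    (hunb : ¬ ∃ C : ℝ, ∀ g ∈ Γ, opn d g ≤ C) :
    ∀ v : Fin d → ℝ, v ≠ 0 →
      ¬ ∃ C : ℝ, ∀ γ ∈ Γ, ‖γ.mulVec v‖ ≤ C :=
  stmt2_general d Γ hmul hirr hunb
end

section
/- Let Γ ⊆ GL(V) be a sub-semigroup. Γ is strongly irreducible on V if and only if the identity component Zc₀(Γ) of the Zariski closure of Γ acts irreducibly on V. -/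
open Matrix

/-- Evaluation of a polynomial in the matrix entries and in `(det g)⁻¹` at a matrix `g`. -/
noncomputable def glEval (d : ℕ) (g : Matrix (Fin d) (Fin d) ℝ)
    (p : MvPolynomial ((Fin d × Fin d) ⊕ Unit) ℝ) : ℝ :=
  MvPolynomial.eval (Sum.elim (fun ij => g ij.1 ij.2) (fun _ => (g.det)⁻¹)) p

/-- The Zariski topology on `GL(d,ℝ)` (viewed inside all matrices): closed sets are the
common zero sets of families of real polynomials in the entries and in `(det g)⁻¹`. -/
noncomputable def glZariski (d : ℕ) : TopologicalSpace (Matrix (Fin d) (Fin d) ℝ) :=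
  TopologicalSpace.generateFrom
    {U | ∃ p : MvPolynomial ((Fin d × Fin d) ⊕ Unit) ℝ, U = {g | glEval d g p ≠ 0}}

/-- The Zariski closure `Zc(Γ)` of `Γ`. -/
noncomputable def zc (d : ℕ) (Γ : Set (Matrix (Fin d) (Fin d) ℝ)) :
    Set (Matrix (Fin d) (Fin d) ℝ) :=
  @closure _ (glZariski d) Γ

/-- The identity component `Zc₀(Γ)`: the connected component of the identity in `Zc(Γ)`,
for the Zariski topology. -/
noncomputable def zc0 (d : ℕ) (Γ : Set (Matrix (Fin d) (Fin d) ℝ)) :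
    Set (Matrix (Fin d) (Fin d) ℝ) :=
  @connectedComponentIn _ (glZariski d) (zc d Γ) 1

namespace Stmt12Aux

open MvPolynomial Set TopologicalSpace

variable {d : ℕ}

abbrev Mat (d : ℕ) := Matrix (Fin d) (Fin d) ℝ
abbrev PolyV (d : ℕ) := MvPolynomial ((Fin d × Fin d) ⊕ Unit) ℝ

noncomputable instance topMat (d : ℕ) : TopologicalSpace (Mat d) := glZariski d

/-- evaluation point of a matrix -/
noncomputable def evalVec (g : Mat d) : ((Fin d × Fin d) ⊕ Unit) → ℝ :=
  Sum.elim (fun ij => g ij.1 ij.2) (fun _ => (g.det)⁻¹)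

lemma glEval_def (g : Mat d) (p : PolyV d) :
    glEval d g p = MvPolynomial.eval (evalVec g) p := rfl

def zeroSet (P : Set (PolyV d)) : Set (Mat d) :=
  {g | ∀ p ∈ P, MvPolynomial.eval (evalVec g) p = 0}

lemma isOpen_basic (p : PolyV d) :
    IsOpen {g : Mat d | MvPolynomial.eval (evalVec g) p ≠ 0} :=
  TopologicalSpace.isOpen_generateFrom_of_mem ⟨p, rfl⟩

lemma isClosed_zeroSet (P : Set (PolyV d)) : IsClosed (zeroSet P) := by
  have h : zeroSet P = ⋂ p ∈ P, {g : Mat d | MvPolynomial.eval (evalVec g) p = 0} := by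
    ext g; simp [zeroSet]
  rw [h]
  refine isClosed_biInter fun p _ => ?_
  have h2 := (isOpen_basic (d := d) p).isClosed_compl
  convert h2 using 1
  ext g; simp

lemma exists_zeroSet_of_isClosed {C : Set (Mat d)} (hC : IsClosed C) :
    ∃ P, C = zeroSet P := by
  have h' : TopologicalSpace.GenerateOpen
      {U | ∃ p : PolyV d, U = {g | glEval d g p ≠ 0}} Cᶜ := hC.isOpen_compl
  suffices H : ∀ U, TopologicalSpace.GenerateOpen
      {U | ∃ p : PolyV d, U = {g | glEval d g p ≠ 0}} U → ∃ P, Uᶜ = zeroSet P by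
    obtain ⟨P, hP⟩ := H Cᶜ h'
    exact ⟨P, by rwa [compl_compl] at hP⟩
  intro U hU
  induction hU with
  | basic U hU =>
      obtain ⟨p, rfl⟩ := hU
      exact ⟨{p}, by ext g; simp [zeroSet, glEval_def]⟩
  | univ => exact ⟨{1}, by ext g; simp [zeroSet]⟩
  | inter U V hU hV ihU ihV =>
      obtain ⟨P, hP⟩ := ihU; obtain ⟨Q, hQ⟩ := ihV
      refine ⟨Set.image2 (· * ·) P Q, ?_⟩
      ext g
      constructor
      · intro hg r hr
        obtain ⟨p, hp, q, hq, rfl⟩ := hr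
        rcases not_and_or.mp hg with h | h
        · have : g ∈ zeroSet P := by rw [← hP]; exact h
          simp [_root_.map_mul, this p hp]
        · have : g ∈ zeroSet Q := by rw [← hQ]; exact h
          simp [_root_.map_mul, this q hq]
      · intro hg
        intro hUV
        by_cases hgP : g ∈ zeroSet P
        · have : g ∈ Uᶜ := by rw [hP]; exact hgP
          exact this hUV.1
        · have : ∃ p ∈ P, MvPolynomial.eval (evalVec g) p ≠ 0 := by
            by_contra hc; push_neg at hc; exact hgP hc
          obtain ⟨p, hp, hpne⟩ := this
          have hgQ : g ∈ zeroSet Q := by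
            intro q hq
            have := hg (p * q) (Set.mem_image2_of_mem hp hq)
            rw [_root_.map_mul] at this
            exact (mul_eq_zero.mp this).resolve_left hpne
          have : g ∈ Vᶜ := by rw [hQ]; exact hgQ
          exact this hUV.2
  | sUnion T hT ih =>
      choose P hP using ih
      refine ⟨⋃ (s) (h : s ∈ T), P s h, ?_⟩
      ext g
      constructor
      · intro hg p hp
        simp only [Set.mem_iUnion] at hp
        obtain ⟨s, hs, hps⟩ := hp
        have : g ∈ sᶜ := fun hgs => hg (Set.mem_sUnion.mpr ⟨s, hs, hgs⟩)
        rw [hP s hs] at this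
        exact this p hps
      · intro hg hgU
        obtain ⟨s, hs, hgs⟩ := Set.mem_sUnion.mp hgU
        have : g ∈ zeroSet (P s hs) := fun p hp =>
          hg p (Set.mem_iUnion.mpr ⟨s, Set.mem_iUnion.mpr ⟨hs, hp⟩⟩)
        rw [← hP s hs] at this
        exact this hgs

/-- the ideal of polynomials vanishing on a set -/
noncomputable def idealOf (C : Set (Mat d)) : Ideal (PolyV d) where
  carrier := {p | ∀ g ∈ C, MvPolynomial.eval (evalVec g) p = 0}
  add_mem' := by intro a b ha hb g hg; simp [map_add, ha g hg, hb g hg]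
  zero_mem' := by intro g hg; simp
  smul_mem' := by intro c p hp g hg; simp [smul_eq_mul, _root_.map_mul, hp g hg]

lemma zeroSet_idealOf {C : Set (Mat d)} (hC : IsClosed C) :
    zeroSet (idealOf C : Set (PolyV d)) = C := by
  obtain ⟨P, rfl⟩ := exists_zeroSet_of_isClosed hC
  apply subset_antisymm
  · intro g hg p hp
    exact hg p (fun g' hg' => hg' p hp)
  · intro g hg p hp
    exact hp g hg

lemma wf_closeds :
    WellFounded ((· < ·) : TopologicalSpace.Closeds (Mat d) →
      TopologicalSpace.Closeds (Mat d) → Prop) := by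
  have hwf : WellFounded ((· > ·) : Ideal (PolyV d) → Ideal (PolyV d) → Prop) :=
    (inferInstance : WellFoundedGT (Ideal (PolyV d))).wf
  have hInv := InvImage.wf
    (fun C : TopologicalSpace.Closeds (Mat d) => idealOf (C : Set (Mat d))) hwf
  refine Subrelation.wf ?_ hInv
  intro C C' hlt
  have hle : idealOf ((C' : Set (Mat d))) ≤ idealOf (C : Set (Mat d)) := by
    intro p hp g hg
    exact hp g (hlt.le hg)
  refine lt_of_le_of_ne hle ?_
  intro heq
  have heq' : idealOf ((C' : Set (Mat d))) = idealOf ((C : Set (Mat d))) := heq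
  apply hlt.ne
  have hsets : (C : Set (Mat d)) = (C' : Set (Mat d)) := by
    rw [← zeroSet_idealOf C.isClosed, ← zeroSet_idealOf C'.isClosed, heq']
  exact SetLike.coe_injective hsets

instance noeth : TopologicalSpace.NoetherianSpace (Mat d) := by
  refine ⟨Subrelation.wf ?_ (InvImage.wf
    (fun U : TopologicalSpace.Opens (Mat d) =>
      (⟨(U : Set (Mat d))ᶜ, U.isOpen.isClosed_compl⟩ : TopologicalSpace.Closeds (Mat d)))
    wf_closeds)⟩
  intro U V h
  -- h : U > V, goal : complement of U < complement of V (as closeds)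
  have h1 : (V : Set (Mat d)) < (U : Set (Mat d)) := SetLike.coe_ssubset_coe.mpr h
  have h2 : ((U : Set (Mat d))ᶜ) < ((V : Set (Mat d))ᶜ) := compl_lt_compl_iff_lt.mpr h1
  show (⟨(U : Set (Mat d))ᶜ, U.isOpen.isClosed_compl⟩ : TopologicalSpace.Closeds (Mat d)) <
    ⟨(V : Set (Mat d))ᶜ, V.isOpen.isClosed_compl⟩
  exact SetLike.coe_ssubset_coe.mp h2

lemma eval_bind₁' {σ τ : Type} (f : τ → ℝ) (g : σ → MvPolynomial τ ℝ)
    (φ : MvPolynomial σ ℝ) :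
    MvPolynomial.eval f (MvPolynomial.bind₁ g φ) =
      MvPolynomial.eval (fun i => MvPolynomial.eval f (g i)) φ := by
  have e : ∀ {υ : Type} (v : υ → ℝ) (q : MvPolynomial υ ℝ),
      MvPolynomial.aeval v q = MvPolynomial.eval v q := by
    intro υ v q; rw [← MvPolynomial.coe_aeval_eq_eval]; rfl
  have h := MvPolynomial.aeval_bind₁ (S := ℝ) f g φ
  simp only [e] at h
  exact h

lemma continuous_of_poly {F : Mat d → Mat d} (σf : ((Fin d × Fin d) ⊕ Unit) → PolyV d)
    (hF : ∀ g s, MvPolynomial.eval (evalVec g) (σf s) = evalVec (F g) s) :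
    Continuous F := by
  refine continuous_generateFrom_iff.mpr ?_
  rintro U ⟨p, rfl⟩
  have : F ⁻¹' {g | glEval d g p ≠ 0} =
      {g : Mat d | MvPolynomial.eval (evalVec g) (MvPolynomial.bind₁ σf p) ≠ 0} := by
    ext g
    simp only [Set.mem_preimage, Set.mem_setOf_eq, glEval_def]
    rw [eval_bind₁']
    have : (fun i => MvPolynomial.eval (evalVec g) (σf i)) = evalVec (F g) := funext (hF g)
    rw [this]
  rw [this]
  exact isOpen_basic _

noncomputable def varMat (d : ℕ) : Matrix (Fin d) (Fin d) (PolyV d) :=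
  Matrix.of fun i j => MvPolynomial.X (Sum.inl (i, j))

lemma eval_varMat (g : Mat d) :
    (varMat d).map (MvPolynomial.eval (evalVec g)) = g := by
  ext i j; simp [varMat, evalVec]

lemma eval_det (g : Mat d) :
    MvPolynomial.eval (evalVec g) (varMat d).det = g.det := by
  rw [RingHom.map_det, RingHom.mapMatrix_apply, eval_varMat]

lemma eval_adj (g : Mat d) (i j : Fin d) :
    MvPolynomial.eval (evalVec g) ((varMat d).adjugate i j) = g.adjugate i j := by
  have h := (MvPolynomial.eval (evalVec g)).map_adjugate (varMat d)
  rw [RingHom.mapMatrix_apply, RingHom.mapMatrix_apply, eval_varMat] at h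
  exact congrFun (congrFun h i) j

lemma continuous_lmul (a : Mat d) : Continuous (fun g : Mat d => a * g) := by
  apply continuous_of_poly (Sum.elim
    (fun ij => ∑ k, MvPolynomial.C (a ij.1 k) * MvPolynomial.X (Sum.inl (k, ij.2)))
    (fun _ => MvPolynomial.C ((a.det)⁻¹) * MvPolynomial.X (Sum.inr ())))
  rintro g (⟨i, j⟩ | ⟨⟩)
  · simp [evalVec, Matrix.mul_apply]
  · simp only [evalVec, Matrix.det_mul, mul_inv, Sum.elim_inr, _root_.map_mul,
      MvPolynomial.eval_C, MvPolynomial.eval_X]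

lemma continuous_rmul (a : Mat d) : Continuous (fun g : Mat d => g * a) := by
  apply continuous_of_poly (Sum.elim
    (fun ij => ∑ k, MvPolynomial.X (Sum.inl (ij.1, k)) * MvPolynomial.C (a k ij.2))
    (fun _ => MvPolynomial.X (Sum.inr ()) * MvPolynomial.C ((a.det)⁻¹)))
  rintro g (⟨i, j⟩ | ⟨⟩)
  · simp [evalVec, Matrix.mul_apply]
  · simp only [evalVec, Matrix.det_mul, mul_inv, Sum.elim_inr, _root_.map_mul,
      MvPolynomial.eval_C, MvPolynomial.eval_X]

lemma continuous_inv : Continuous (fun g : Mat d => g⁻¹) := by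
  apply continuous_of_poly (Sum.elim
    (fun ij => MvPolynomial.X (Sum.inr ()) * (varMat d).adjugate ij.1 ij.2)
    (fun _ => (varMat d).det))
  rintro g (⟨i, j⟩ | ⟨⟩)
  · have h1 : evalVec (g⁻¹ : Mat d) (Sum.inl (i, j)) = (g⁻¹ : Mat d) i j := rfl
    have h2 : evalVec g (Sum.inr ()) = (g.det)⁻¹ := rfl
    simp only [Sum.elim_inl]
    rw [h1, _root_.map_mul, MvPolynomial.eval_X, h2, eval_adj, Matrix.inv_def,
      Ring.inverse_eq_inv', Matrix.smul_apply, smul_eq_mul]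
  · have h1 : evalVec (g⁻¹ : Mat d) (Sum.inr ()) = ((g⁻¹ : Mat d).det)⁻¹ := rfl
    simp only [Sum.elim_inr]
    rw [h1, eval_det, Matrix.det_nonsing_inv, Ring.inverse_eq_inv', inv_inv]

def GLset (d : ℕ) : Set (Mat d) := {g | IsUnit g}

lemma isClosed_GL : IsClosed (GLset d) := by
  have h : GLset d = zeroSet {(varMat d).det * MvPolynomial.X (Sum.inr ()) - 1} := by
    ext g
    simp only [GLset, zeroSet, Set.mem_setOf_eq, Set.mem_singleton_iff, forall_eq,
      map_sub, _root_.map_mul, _root_.map_one, eval_det, MvPolynomial.eval_X]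
    have he : evalVec g (Sum.inr ()) = (g.det)⁻¹ := rfl
    rw [he, Matrix.isUnit_iff_isUnit_det, isUnit_iff_ne_zero]
    constructor
    · intro hne; rw [mul_inv_cancel₀ hne]; ring
    · intro hz hdet
      rw [hdet] at hz; simp at hz
  rw [h]; exact isClosed_zeroSet _

lemma isClosed_stab (W W' : Submodule ℝ (Fin d → ℝ)) :
    IsClosed {g : Mat d | ∀ w ∈ W, g.mulVec w ∈ W'} := by
  classical
  set Q := (Fin d → ℝ) ⧸ W' with hQ
  let b : Module.Basis (Fin (Module.finrank ℝ Q)) ℝ Q := Module.finBasis ℝ Q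
  let f : Fin (Module.finrank ℝ Q) → ((Fin d → ℝ) →ₗ[ℝ] ℝ) :=
    fun l => (b.coord l).comp (W'.mkQ)
  have hmem : ∀ x : Fin d → ℝ, x ∈ W' ↔ ∀ l, f l x = 0 := by
    intro x
    constructor
    · intro hx l
      have h0 : W'.mkQ x = 0 := by
        rw [Submodule.mkQ_apply, Submodule.Quotient.mk_eq_zero]; exact hx
      simp [f, h0]
    · intro hl
      rw [← Submodule.Quotient.mk_eq_zero W', ← b.forall_coord_eq_zero_iff]
      intro l
      have h := hl l
      exact h
  have hexp : ∀ (g : Mat d) (w : Fin d → ℝ) (l), f l (g.mulVec w) =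
      ∑ i, ∑ j, f l (Pi.single i 1) * w j * g i j := by
    intro g w l
    have hx : g.mulVec w = ∑ i, Pi.single i (g.mulVec w i) :=
      (Finset.univ_sum_single (g.mulVec w)).symm
    rw [hx, map_sum]
    refine Finset.sum_congr rfl fun i _ => ?_
    have hsingle : Pi.single i (g.mulVec w i) = (g.mulVec w i) • (Pi.single i (1:ℝ) : Fin d → ℝ) := by
      rw [← Pi.single_smul, smul_eq_mul, mul_one]
    rw [hsingle, _root_.map_smul, smul_eq_mul]
    have hmv : g.mulVec w i = ∑ j, g i j * w j := by
      simp [Matrix.mulVec, dotProduct]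
    rw [hmv, Finset.sum_mul]
    refine Finset.sum_congr rfl fun j _ => ?_
    ring
  have key : {g : Mat d | ∀ w ∈ W, g.mulVec w ∈ W'} =
      ⋂ (w : W) (l : Fin (Module.finrank ℝ Q)),
        zeroSet {∑ i, ∑ j, MvPolynomial.C (f l (Pi.single i 1) * (w : Fin d → ℝ) j) *
          MvPolynomial.X (Sum.inl (i, j))} := by
    ext g
    simp only [Set.mem_setOf_eq, Set.mem_iInter]
    constructor
    · intro hg w l p hp
      rw [Set.mem_singleton_iff] at hp
      subst hp
      have h0 := (hmem (g.mulVec (w : Fin d → ℝ))).mp (hg _ w.2) l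
      rw [hexp] at h0
      rw [← h0]
      simp only [map_sum, _root_.map_mul, MvPolynomial.eval_C, MvPolynomial.eval_X]
      refine Finset.sum_congr rfl fun i _ => Finset.sum_congr rfl fun j _ => ?_
      have : evalVec g (Sum.inl (i, j)) = g i j := rfl
      rw [this]
    · intro hg w hw
      rw [hmem]
      intro l
      have h0 := hg ⟨w, hw⟩ l _ rfl
      simp only [map_sum, _root_.map_mul, MvPolynomial.eval_C, MvPolynomial.eval_X] at h0
      rw [hexp]
      rw [← h0]
      refine Finset.sum_congr rfl fun i _ => Finset.sum_congr rfl fun j _ => ?_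
      have : evalVec g (Sum.inl (i, j)) = g i j := rfl
      rw [this]
  rw [key]
  exact isClosed_iInter fun w => isClosed_iInter fun l => isClosed_zeroSet _

/-! ### Linear algebra on `mapM` -/

noncomputable def mapM (g : Mat d) (W : Submodule ℝ (Fin d → ℝ)) :
    Submodule ℝ (Fin d → ℝ) := W.map g.mulVecLin

lemma mem_mapM {g : Mat d} {W : Submodule ℝ (Fin d → ℝ)} {v : Fin d → ℝ} :
    v ∈ mapM g W ↔ ∃ w ∈ W, g.mulVec w = v := by
  simp [mapM, Submodule.mem_map, Matrix.mulVecLin_apply]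

lemma mapM_one (W : Submodule ℝ (Fin d → ℝ)) : mapM (1 : Mat d) W = W := by
  simp [mapM, Matrix.mulVecLin_one, Submodule.map_id]

lemma mapM_mul (a b : Mat d) (W : Submodule ℝ (Fin d → ℝ)) :
    mapM (a * b) W = mapM a (mapM b W) := by
  simp [mapM, Matrix.mulVecLin_mul, Submodule.map_comp]

noncomputable def mulVecEquiv {g : Mat d} (hg : IsUnit g) :
    (Fin d → ℝ) ≃ₗ[ℝ] (Fin d → ℝ) :=
  LinearEquiv.ofLinear g.mulVecLin g⁻¹.mulVecLin
    (by
      rw [← Matrix.mulVecLin_mul, Matrix.mul_nonsing_inv _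
        ((Matrix.isUnit_iff_isUnit_det g).mp hg), Matrix.mulVecLin_one])
    (by
      rw [← Matrix.mulVecLin_mul, Matrix.nonsing_inv_mul _
        ((Matrix.isUnit_iff_isUnit_det g).mp hg), Matrix.mulVecLin_one])

lemma mulVecEquiv_coe {g : Mat d} (hg : IsUnit g) :
    (mulVecEquiv hg : (Fin d → ℝ) →ₗ[ℝ] (Fin d → ℝ)) = g.mulVecLin := rfl

lemma mapM_finrank {g : Mat d} (hg : IsUnit g) (W : Submodule ℝ (Fin d → ℝ)) :
    Module.finrank ℝ (mapM g W) = Module.finrank ℝ W := by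
  have h := LinearEquiv.finrank_map_eq (mulVecEquiv hg) W
  rwa [mulVecEquiv_coe] at h

lemma mapM_eq_bot_iff {g : Mat d} (hg : IsUnit g) {W : Submodule ℝ (Fin d → ℝ)} :
    mapM g W = ⊥ ↔ W = ⊥ := by
  constructor
  · intro h
    rw [Submodule.eq_bot_iff]
    intro w hw
    have : g.mulVecLin w ∈ mapM g W := Submodule.mem_map_of_mem hw
    rw [h, Submodule.mem_bot] at this
    have := congrArg (mulVecEquiv hg).symm
      (show (mulVecEquiv hg) w = 0 from this)
    simpa using this
  · intro h; rw [h, mapM]; exact Submodule.map_bot _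
lemma mapM_eq_top_iff {g : Mat d} (hg : IsUnit g) {W : Submodule ℝ (Fin d → ℝ)} :
    mapM g W = ⊤ ↔ W = ⊤ := by
  constructor
  · intro h
    rw [Submodule.eq_top_iff']
    intro v
    have : g.mulVecLin v ∈ mapM g W := by rw [h]; trivial
    obtain ⟨w, hw, hww⟩ := this
    have : w = v := by
      have := congrArg (mulVecEquiv hg).symm
        (show (mulVecEquiv hg) w = (mulVecEquiv hg) v from hww)
      simpa using this
    rwa [← this]
  · intro h
    rw [h]
    rw [Submodule.eq_top_iff']
    intro v
    exact ⟨(mulVecEquiv hg).symm v, trivial, (mulVecEquiv hg).apply_symm_apply v⟩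

lemma mapM_eq_of_le {g : Mat d} (hg : IsUnit g) {W : Submodule ℝ (Fin d → ℝ)}
    (h : mapM g W ≤ W) : mapM g W = W :=
  Submodule.eq_of_le_of_finrank_le h (by rw [mapM_finrank hg])

/-! ### The Zariski closure of a sub-semigroup of `GL` is a group -/

section closure

variable {Γ : Set (Mat d)} (hmul : ∀ a ∈ Γ, ∀ b ∈ Γ, a * b ∈ Γ)
  (hunit : ∀ g ∈ Γ, IsUnit g)

include hunit in
lemma S_unit {g : Mat d} (hg : g ∈ closure Γ) : IsUnit g := by
  have h : closure Γ ⊆ GLset d :=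
    closure_minimal (fun x hx => hunit x hx) isClosed_GL
  exact h hg

include hmul hunit in
lemma S_mul : ∀ a ∈ closure Γ, ∀ b ∈ closure Γ, a * b ∈ closure Γ := by
  have h1 : ∀ a ∈ Γ, ∀ s ∈ closure Γ, a * s ∈ closure Γ := by
    intro a ha s hs
    have hc : (fun g : Mat d => a * g) '' closure Γ ⊆
        closure ((fun g : Mat d => a * g) '' Γ) :=
      image_closure_subset_closure_image (continuous_lmul a)
    have h2 : (fun g : Mat d => a * g) '' Γ ⊆ closure Γ := by
      rintro _ ⟨b, hb, rfl⟩; exact subset_closure (hmul a ha b hb)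
    exact (closure_minimal h2 isClosed_closure) (hc (Set.mem_image_of_mem _ hs))
  intro a ha b hb
  have h3 : (fun g : Mat d => g * b) '' Γ ⊆ closure Γ := by
    rintro _ ⟨c, hc, rfl⟩; exact h1 c hc b hb
  have hc : (fun g : Mat d => g * b) '' closure Γ ⊆
      closure ((fun g : Mat d => g * b) '' Γ) :=
    image_closure_subset_closure_image (continuous_rmul b)
  exact (closure_minimal h3 isClosed_closure) (hc (Set.mem_image_of_mem _ ha))

noncomputable def lmulHomeo (u : Mat d) (hu : IsUnit u) : Mat d ≃ₜ Mat d where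
  toFun g := u * g
  invFun g := u⁻¹ * g
  left_inv g := by
    show u⁻¹ * (u * g) = g
    rw [← mul_assoc, Matrix.nonsing_inv_mul _ ((Matrix.isUnit_iff_isUnit_det u).mp hu),
      one_mul]
  right_inv g := by
    show u * (u⁻¹ * g) = g
    rw [← mul_assoc, Matrix.mul_nonsing_inv _ ((Matrix.isUnit_iff_isUnit_det u).mp hu),
      one_mul]
  continuous_toFun := continuous_lmul u
  continuous_invFun := continuous_lmul u⁻¹

include hmul hunit in
lemma chain_key {x : Mat d} (hx : x ∈ closure Γ) :
    closure Γ = (fun g : Mat d => x * g) '' closure Γ := by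
  have hxu : IsUnit x := S_unit hunit hx
  have hclosed : ∀ n : ℕ, IsClosed ((fun g : Mat d => x ^ n * g) '' closure Γ) := by
    intro n
    exact (lmulHomeo (x ^ n) (hxu.pow n)).isClosedMap _ isClosed_closure
  obtain ⟨C, hCmem, hmin⟩ := wf_closeds.has_min
    (Set.range fun n : ℕ => (⟨_, hclosed n⟩ : TopologicalSpace.Closeds (Mat d)))
    ⟨_, ⟨0, rfl⟩⟩
  obtain ⟨n, hn⟩ := hCmem
  have hsub : ∀ m : ℕ, (fun g : Mat d => x ^ (m + 1) * g) '' closure Γ ⊆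
      (fun g : Mat d => x ^ m * g) '' closure Γ := by
    rintro m _ ⟨g, hg, rfl⟩
    refine ⟨x * g, S_mul hmul hunit x hx g hg, ?_⟩
    show x ^ m * (x * g) = x ^ (m + 1) * g
    rw [pow_succ, mul_assoc]
  have heq : (fun g : Mat d => x ^ (n + 1) * g) '' closure Γ =
      (fun g : Mat d => x ^ n * g) '' closure Γ := by
    by_contra hne
    have hlt : (⟨_, hclosed (n + 1)⟩ : TopologicalSpace.Closeds (Mat d)) <
        ⟨_, hclosed n⟩ := by
      rw [← SetLike.coe_ssubset_coe]
      exact lt_of_le_of_ne (hsub n) hne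
    have hn' : (⟨_, hclosed n⟩ : TopologicalSpace.Closeds (Mat d)) = C := hn
    rw [hn'] at hlt
    exact hmin _ ⟨n + 1, rfl⟩ hlt
  have hinj : Function.Injective (fun g : Mat d => x ^ n * g) :=
    fun a b hab => (hxu.pow n).mul_left_cancel hab
  have hcomp : (fun g : Mat d => x ^ n * g) '' ((fun g : Mat d => x * g) '' closure Γ) =
      (fun g : Mat d => x ^ n * g) '' closure Γ := by
    rw [← Set.image_comp]
    have : ((fun g : Mat d => x ^ n * g) ∘ (fun g : Mat d => x * g)) =
        (fun g : Mat d => x ^ (n + 1) * g) := by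
      funext g
      show x ^ n * (x * g) = x ^ (n + 1) * g
      rw [pow_succ, mul_assoc]
    rw [this, heq]
  exact ((Set.image_injective.mpr hinj) hcomp).symm

include hmul hunit in
lemma S_one (hne : Γ.Nonempty) : (1 : Mat d) ∈ closure Γ := by
  obtain ⟨x, hx⟩ := hne
  have hxS : x ∈ closure Γ := subset_closure hx
  have h := chain_key hmul hunit hxS
  obtain ⟨s, hs, hxs⟩ := h ▸ hxS
  have hxu := S_unit hunit hxS
  have hxs' : x * s = x := hxs
  have hs1 : s = 1 := hxu.mul_left_cancel (by rw [hxs', mul_one])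
  rwa [← hs1]

include hmul hunit in
lemma S_inv {x : Mat d} (hx : x ∈ closure Γ) : x⁻¹ ∈ closure Γ := by
  have h := chain_key hmul hunit hx
  have hne : Γ.Nonempty := closure_nonempty_iff.mp ⟨x, hx⟩
  have h1 : (1 : Mat d) ∈ (fun g : Mat d => x * g) '' closure Γ :=
    h ▸ S_one hmul hunit hne
  obtain ⟨s, hs, hxs⟩ := h1
  have : x⁻¹ = s := Matrix.inv_eq_right_inv hxs
  rwa [this]

end closure

/-! ### Connected components -/

lemma image_connCompIn (h : Mat d ≃ₜ Mat d) (F : Set (Mat d)) {x : Mat d} (hx : x ∈ F) :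
    h '' connectedComponentIn F x = connectedComponentIn (h '' F) (h x) := by
  apply subset_antisymm
  · exact h.continuous.image_connectedComponentIn_subset hx
  · intro y hy
    have hmem : h x ∈ h '' F := Set.mem_image_of_mem h hx
    have h2 := h.symm.continuous.image_connectedComponentIn_subset (s := h '' F) hmem
    have h3 : h.symm '' (h '' F) = F := by
      rw [← Set.image_comp]; simp
    have h4 : h.symm (h x) = x := h.symm_apply_apply x
    rw [h3, h4] at h2
    have h5 : h.symm y ∈ connectedComponentIn F x :=
      h2 (Set.mem_image_of_mem _ hy)
    exact ⟨h.symm y, h5, h.apply_symm_apply y⟩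

section group

variable {Γ : Set (Mat d)} (hmul : ∀ a ∈ Γ, ∀ b ∈ Γ, a * b ∈ Γ)
  (hunit : ∀ g ∈ Γ, IsUnit g)

include hmul hunit in
lemma comp_coset {x g : Mat d} (hg : g ∈ closure Γ)
    (hx : x ∈ connectedComponentIn (closure Γ) g) :
    ∃ h ∈ connectedComponentIn (closure Γ) 1, x = g * h := by
  have hgu := S_unit hunit hg
  have hgd := (Matrix.isUnit_iff_isUnit_det g).mp hgu
  have hgi : IsUnit (g⁻¹ : Mat d) := by
    rw [Matrix.isUnit_iff_isUnit_det, Matrix.det_nonsing_inv, Ring.inverse_eq_inv']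
    exact isUnit_iff_ne_zero.mpr (inv_ne_zero (isUnit_iff_ne_zero.mp hgd))
  have himg : (fun y : Mat d => g⁻¹ * y) '' closure Γ = closure Γ := by
    apply subset_antisymm
    · rintro _ ⟨y, hy, rfl⟩
      exact S_mul hmul hunit _ (S_inv hmul hunit hg) _ hy
    · intro y hy
      refine ⟨g * y, S_mul hmul hunit g hg y hy, ?_⟩
      show g⁻¹ * (g * y) = y
      rw [← mul_assoc, Matrix.nonsing_inv_mul _ hgd, one_mul]
  have hic := image_connCompIn (lmulHomeo g⁻¹ hgi) (closure Γ) hg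
  have hbase : (lmulHomeo g⁻¹ hgi) g = (1 : Mat d) := by
    show g⁻¹ * g = 1
    rw [Matrix.nonsing_inv_mul _ hgd]
  have himg' : (lmulHomeo g⁻¹ hgi) '' closure Γ = closure Γ := himg
  rw [hbase, himg'] at hic
  have hxmem : g⁻¹ * x ∈ connectedComponentIn (closure Γ) 1 := by
    rw [← hic]
    exact Set.mem_image_of_mem _ hx
  refine ⟨g⁻¹ * x, hxmem, ?_⟩
  rw [← mul_assoc, Matrix.mul_nonsing_inv _ hgd, one_mul]

include hmul hunit in
lemma finite_orbit (W : Submodule ℝ (Fin d → ℝ))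
    (hW : ∀ g ∈ connectedComponentIn (closure Γ) 1, mapM g W ≤ W) :
    {V | ∃ g ∈ closure Γ, V = mapM g W}.Finite := by
  classical
  set S := closure Γ with hS
  have hfac : ∀ x y : ↥S, connectedComponent x = connectedComponent y →
      mapM (x : Mat d) W = mapM (y : Mat d) W := by
    intro x y hxy
    have hyx : (y : Mat d) ∈ connectedComponentIn S (x : Mat d) := by
      rw [connectedComponentIn_eq_image x.2]
      exact ⟨y, by rw [hxy]; exact mem_connectedComponent, rfl⟩
    obtain ⟨h, hh, hmul'⟩ := comp_coset hmul hunit x.2 hyx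
    have hhu : IsUnit h := S_unit hunit (connectedComponentIn_subset _ _ hh)
    have hWh : mapM h W = W := mapM_eq_of_le hhu (hW h hh)
    rw [hmul', mapM_mul, hWh]
  have hcomp : (Set.range fun x : ↥S => connectedComponent x).Finite := by
    have hirr : (irreducibleComponents ↥S).Finite :=
      TopologicalSpace.NoetherianSpace.finite_irreducibleComponents
    apply (hirr.image (fun T => ⋃ x ∈ T, connectedComponent x)).subset
    rintro _ ⟨x, rfl⟩
    refine ⟨irreducibleComponent x, irreducibleComponent_mem_irreducibleComponents x, ?_⟩
    have h1 : irreducibleComponent x ⊆ connectedComponent x :=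
      (isIrreducible_irreducibleComponent.isPreirreducible.isPreconnected
        ).subset_connectedComponent mem_irreducibleComponent
    apply subset_antisymm
    · refine Set.iUnion₂_subset fun y hy => ?_
      rw [← connectedComponent_eq (h1 hy)]
    · intro z hz
      exact Set.mem_biUnion mem_irreducibleComponent hz
  have hsubset : {V | ∃ g ∈ S, V = mapM g W} ⊆
      (fun T : Set ↥S => if h : ∃ x : ↥S, T = connectedComponent x
        then mapM (h.choose : Mat d) W else ⊥) ''
      (Set.range fun x : ↥S => connectedComponent x) := by
    rintro V ⟨g, hg, rfl⟩
    refine ⟨connectedComponent (⟨g, hg⟩ : ↥S), Set.mem_range_self _, ?_⟩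
    have hex : ∃ x : ↥S, connectedComponent (⟨g, hg⟩ : ↥S) = connectedComponent x :=
      ⟨⟨g, hg⟩, rfl⟩
    show (if h : ∃ x : ↥S, connectedComponent (⟨g, hg⟩ : ↥S) = connectedComponent x
      then mapM ((h.choose : ↥S) : Mat d) W else ⊥) = mapM g W
    rw [dif_pos hex]
    exact hfac _ _ hex.choose_spec.symm
  exact (hcomp.image _).subset hsubset

end group

/-! ### enumeration of a finite nonempty set -/

lemma exists_fin_enum {α : Type*} {s : Set α} (hfin : s.Finite) (hne : s.Nonempty) :
    ∃ (n : ℕ) (f : Fin (n + 1) → α), s = Set.range f := by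
  classical
  haveI := hfin.fintype
  have hpos : 0 < Fintype.card s := Fintype.card_pos_iff.mpr (hne.to_subtype)
  obtain ⟨m, hm⟩ := Nat.exists_eq_succ_of_ne_zero hpos.ne'
  let e : Fin (Fintype.card s) ≃ s := (Fintype.equivFin s).symm
  refine ⟨m, fun i => (e (Fin.cast hm.symm i) : α), ?_⟩
  ext x
  constructor
  · intro hx
    refine ⟨Fin.cast hm (Fintype.equivFin s ⟨x, hx⟩), ?_⟩
    simp [e]
  · rintro ⟨i, rfl⟩
    exact (e (Fin.cast hm.symm i)).2

/-! ### a subspace inside a finite union of subspaces -/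

lemma le_of_subset_iUnion {n : ℕ} (U : Submodule ℝ (Fin d → ℝ))
    (Wf : Fin (n + 1) → Submodule ℝ (Fin d → ℝ))
    (h : (U : Set (Fin d → ℝ)) ⊆ ⋃ i, (Wf i : Set (Fin d → ℝ))) :
    ∃ j, U ≤ Wf j := by
  have hcov : ⋃ i, (((Wf i).comap U.subtype : Submodule ℝ U) : Set U) = Set.univ := by
    ext x
    simp only [Set.mem_iUnion, Set.mem_univ, iff_true, SetLike.mem_coe,
      Submodule.mem_comap, Submodule.coe_subtype]
    obtain ⟨_, ⟨i, rfl⟩, hi⟩ := h x.2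
    exact ⟨i, hi⟩
  obtain ⟨j, hj⟩ := Subspace.exists_eq_top_of_iUnion_eq_univ hcov
  exact ⟨j, Submodule.comap_subtype_eq_top.mp hj⟩

/-! ### preconnected sets and disjoint closed covers -/

lemma preconn_subset {X : Type*} [TopologicalSpace X] {s : Set X} (hs : IsPreconnected s)
    {ι : Type*} [DecidableEq ι] (F : Finset ι) (C : ι → Set X)
    (hC : ∀ i ∈ F, IsClosed (C i))
    (hcover : s ⊆ ⋃ i ∈ F, C i)
    (hdisj : ∀ i ∈ F, ∀ j ∈ F, i ≠ j → ∀ g ∈ s, g ∈ C i → g ∈ C j → False)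
    {x : X} {i₀ : ι} (hx : x ∈ s) (hi₀ : i₀ ∈ F) (hxi : x ∈ C i₀) : s ⊆ C i₀ := by
  set B := ⋃ j ∈ F.erase i₀, C j with hB
  have hBclosed : IsClosed B :=
    isClosed_biUnion_finset fun j hj => hC j (Finset.mem_of_mem_erase hj)
  have hAB : s ⊆ C i₀ ∪ B := by
    intro g hg
    rcases Set.mem_iUnion₂.mp (hcover hg) with ⟨j, hj, hgj⟩
    by_cases hji : j = i₀
    · subst hji; exact Or.inl hgj
    · exact Or.inr (Set.mem_biUnion (Finset.mem_erase.mpr ⟨hji, hj⟩) hgj)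
  have hdis : ∀ g ∈ s, g ∈ C i₀ → g ∈ B → False := by
    intro g hg hgA hgB
    obtain ⟨j, hj, hgj⟩ := Set.mem_iUnion₂.mp hgB
    have hjF := Finset.mem_of_mem_erase hj
    have hji : j ≠ i₀ := (Finset.mem_erase.mp hj).1
    exact hdisj i₀ hi₀ j hjF (Ne.symm hji) g hg hgA hgj
  by_contra hns
  rw [Set.not_subset] at hns
  obtain ⟨y, hy, hyn⟩ := hns
  have hsuv : s ⊆ Bᶜ ∪ (C i₀)ᶜ := by
    intro g hg
    by_contra hgc
    simp only [Set.mem_union, not_or, Set.notMem_compl_iff] at hgc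
    exact hdis g hg hgc.2 hgc.1
  have h1 : (s ∩ Bᶜ).Nonempty := ⟨x, hx, fun hxB => hdis x hx hxi hxB⟩
  have h2 : (s ∩ (C i₀)ᶜ).Nonempty := ⟨y, hy, hyn⟩
  obtain ⟨z, hzs, hz12⟩ := hs Bᶜ (C i₀)ᶜ hBclosed.isOpen_compl
    (hC i₀ hi₀).isOpen_compl hsuv h1 h2
  rcases hAB hzs with hzA | hzB
  · exact hz12.2 hzA
  · exact hz12.1 hzB

end Stmt12Aux

/-- A sub-semigroup `Γ ⊆ GL(d,ℝ)` is strongly irreducible iff the identity component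
`Zc₀(Γ)` of its Zariski closure acts irreducibly on `ℝ^d`. -/
theorem stmt12 (d : ℕ) (Γ : Set (Matrix (Fin d) (Fin d) ℝ))
    (hmul : ∀ a ∈ Γ, ∀ b ∈ Γ, a * b ∈ Γ)
    (hunit : ∀ g ∈ Γ, IsUnit g) :
    StronglyIrred d Γ ↔
    (∀ W : Submodule ℝ (Fin d → ℝ),
      (∀ g ∈ zc0 d Γ, ∀ w ∈ W, g.mulVec w ∈ W) → W = ⊥ ∨ W = ⊤) := by
  classical
  have hzc : zc d Γ = closure Γ := rfl
  have hzc0 : zc0 d Γ = connectedComponentIn (closure Γ) 1 := rfl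
  constructor
  · -- strongly irreducible ⇒ Zc₀ acts irreducibly
    intro hSI W hW
    by_contra hcon
    push_neg at hcon
    obtain ⟨hWbot, hWtop⟩ := hcon
    rcases Γ.eq_empty_or_nonempty with hΓ | hne
    · subst hΓ
      exact hSI ⟨0, fun _ => W, fun _ => hWbot, fun _ => hWtop,
        fun γ hγ => absurd hγ (Set.notMem_empty γ)⟩
    · -- the orbit of W under the closure is finite
      have hWle : ∀ g ∈ connectedComponentIn (closure Γ) 1,
          Stmt12Aux.mapM g W ≤ W := by
        intro g hg v hv
        obtain ⟨w, hw, rfl⟩ := Stmt12Aux.mem_mapM.mp hv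
        exact hW g (hzc0 ▸ hg) w hw
      have hfin := Stmt12Aux.finite_orbit hmul hunit W hWle
      have hmem : W ∈ {V | ∃ g ∈ closure Γ, V = Stmt12Aux.mapM g W} :=
        ⟨1, Stmt12Aux.S_one hmul hunit hne, (Stmt12Aux.mapM_one W).symm⟩
      obtain ⟨n, f, hf⟩ := Stmt12Aux.exists_fin_enum hfin ⟨W, hmem⟩
      apply hSI
      refine ⟨n, f, ?_, ?_, ?_⟩
      · intro i
        have : f i ∈ {V | ∃ g ∈ closure Γ, V = Stmt12Aux.mapM g W} := by
          rw [hf]; exact ⟨i, rfl⟩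
        obtain ⟨g, hg, hgi⟩ := this
        rw [hgi]
        intro hbot
        exact hWbot ((Stmt12Aux.mapM_eq_bot_iff (Stmt12Aux.S_unit hunit hg)).mp hbot)
      · intro i
        have : f i ∈ {V | ∃ g ∈ closure Γ, V = Stmt12Aux.mapM g W} := by
          rw [hf]; exact ⟨i, rfl⟩
        obtain ⟨g, hg, hgi⟩ := this
        rw [hgi]
        intro htop
        exact hWtop ((Stmt12Aux.mapM_eq_top_iff (Stmt12Aux.S_unit hunit hg)).mp htop)
      · intro γ hγ v hv
        rw [Set.mem_iUnion] at hv
        obtain ⟨i, hvi⟩ := hv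
        have : f i ∈ {V | ∃ g ∈ closure Γ, V = Stmt12Aux.mapM g W} := by
          rw [hf]; exact ⟨i, rfl⟩
        obtain ⟨g, hg, hgi⟩ := this
        rw [hgi] at hvi
        obtain ⟨w, hw, rfl⟩ := Stmt12Aux.mem_mapM.mp hvi
        have hγg : γ * g ∈ closure Γ :=
          Stmt12Aux.S_mul hmul hunit γ (subset_closure hγ) g hg
        have hmemo : Stmt12Aux.mapM (γ * g) W ∈
            {V | ∃ g ∈ closure Γ, V = Stmt12Aux.mapM g W} := ⟨γ * g, hγg, rfl⟩
        rw [hf] at hmemo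
        obtain ⟨j, hj⟩ := hmemo
        rw [Set.mem_iUnion]
        refine ⟨j, ?_⟩
        have hmv : γ.mulVec (g.mulVec w) = (γ * g).mulVec w := by
          rw [Matrix.mulVec_mulVec]
        rw [hj, hmv]
        exact Stmt12Aux.mem_mapM.mpr ⟨w, hw, rfl⟩
  · -- Zc₀ acts irreducibly ⇒ strongly irreducible
    intro hIrr
    rintro ⟨n, Wf, hbot, htop, hinv⟩
    rcases Γ.eq_empty_or_nonempty with hΓ | hne
    · have hz0 : zc0 d Γ = ∅ := by
        rw [hzc0, hΓ, closure_empty]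
        exact connectedComponentIn_eq_empty (Set.notMem_empty 1)
      have := hIrr (Wf 0) (by rw [hz0]; intro g hg; exact absurd hg (Set.notMem_empty g))
      rcases this with h | h
      · exact hbot 0 h
      · exact htop 0 h
    · -- Γ nonempty
      have h1S : (1 : Matrix (Fin d) (Fin d) ℝ) ∈ closure Γ :=
        Stmt12Aux.S_one hmul hunit hne
      have h1z : (1 : Matrix (Fin d) (Fin d) ℝ) ∈ zc0 d Γ := by
        rw [hzc0]; exact mem_connectedComponentIn h1S
      -- the closed set S' of matrices mapping each W i into some W j
      set S' : Set (Matrix (Fin d) (Fin d) ℝ) :=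
        ⋂ i, ⋃ j, {g : Matrix (Fin d) (Fin d) ℝ | ∀ w ∈ Wf i, g.mulVec w ∈ Wf j}
        with hS'
      have hS'closed : IsClosed S' :=
        isClosed_iInter fun i => isClosed_iUnion_of_finite fun j =>
          Stmt12Aux.isClosed_stab (Wf i) (Wf j)
      have hΓS' : Γ ⊆ S' := by
        intro γ hγ
        rw [hS', Set.mem_iInter]
        intro i
        have hsub : ((Stmt12Aux.mapM γ (Wf i)) : Set (Fin d → ℝ)) ⊆
            ⋃ j, (Wf j : Set (Fin d → ℝ)) := by
          rintro v hv
          obtain ⟨w, hw, rfl⟩ := Stmt12Aux.mem_mapM.mp hv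
          exact hinv γ hγ w (Set.mem_iUnion.mpr ⟨i, hw⟩)
        obtain ⟨j, hj⟩ := Stmt12Aux.le_of_subset_iUnion _ Wf hsub
        rw [Set.mem_iUnion]
        refine ⟨j, fun w hw => ?_⟩
        exact hj (Stmt12Aux.mem_mapM.mpr ⟨w, hw, rfl⟩)
      have hzS' : zc0 d Γ ⊆ S' := by
        rw [hzc0]
        exact (connectedComponentIn_subset _ _).trans
          (closure_minimal hΓS' hS'closed)
      -- pick a subspace of maximal dimension
      obtain ⟨i₀, _, hmax⟩ := Finset.exists_max_image Finset.univ
        (fun i => Module.finrank ℝ (Wf i)) ⟨0, Finset.mem_univ 0⟩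
      set W₀ := Wf i₀ with hW₀
      set F : Finset (Submodule ℝ (Fin d → ℝ)) :=
        (Finset.univ.image Wf).filter
          (fun p => Module.finrank ℝ p = Module.finrank ℝ W₀) with hF
      have hW₀F : W₀ ∈ F :=
        Finset.mem_filter.mpr ⟨Finset.mem_image.mpr ⟨i₀, Finset.mem_univ _, rfl⟩, rfl⟩
      set C : Submodule ℝ (Fin d → ℝ) → Set (Matrix (Fin d) (Fin d) ℝ) :=
        fun V => {g | ∀ w ∈ W₀, g.mulVec w ∈ V} with hC
      have hCmap : ∀ (g : Matrix (Fin d) (Fin d) ℝ) V,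
          g ∈ C V ↔ Stmt12Aux.mapM g W₀ ≤ V := by
        intro g V
        constructor
        · intro hg v hv
          obtain ⟨w, hw, rfl⟩ := Stmt12Aux.mem_mapM.mp hv
          exact hg w hw
        · intro hle w hw
          exact hle (Stmt12Aux.mem_mapM.mpr ⟨w, hw, rfl⟩)
      have hzunit : ∀ g ∈ zc0 d Γ, IsUnit g := by
        intro g hg
        exact Stmt12Aux.S_unit hunit
          ((connectedComponentIn_subset _ _) (hzc0 ▸ hg))
      have hcover : zc0 d Γ ⊆ ⋃ V ∈ F, C V := by
        intro g hg
        have hgS' := hzS' hg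
        rw [hS', Set.mem_iInter] at hgS'
        obtain ⟨j, hj⟩ := Set.mem_iUnion.mp (hgS' i₀)
        have hle : Stmt12Aux.mapM g W₀ ≤ Wf j := by
          intro v hv
          obtain ⟨w, hw, rfl⟩ := Stmt12Aux.mem_mapM.mp hv
          exact hj w hw
        have hrank : Module.finrank ℝ (Wf j) = Module.finrank ℝ W₀ := by
          apply le_antisymm (hmax j (Finset.mem_univ j))
          rw [← Stmt12Aux.mapM_finrank (hzunit g hg) W₀]
          exact Submodule.finrank_mono hle
        exact Set.mem_biUnion
          (Finset.mem_filter.mpr ⟨Finset.mem_image.mpr ⟨j, Finset.mem_univ _, rfl⟩, hrank⟩)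
          ((hCmap g (Wf j)).mpr hle)
      have hdisj : ∀ V₁ ∈ F, ∀ V₂ ∈ F, V₁ ≠ V₂ →
          ∀ g ∈ zc0 d Γ, g ∈ C V₁ → g ∈ C V₂ → False := by
        intro V₁ h₁ V₂ h₂ hne' g hg hg₁ hg₂
        have hr₁ : Module.finrank ℝ V₁ = Module.finrank ℝ W₀ :=
          (Finset.mem_filter.mp h₁).2
        have hr₂ : Module.finrank ℝ V₂ = Module.finrank ℝ W₀ :=
          (Finset.mem_filter.mp h₂).2
        have hgu := hzunit g hg
        have heq₁ : Stmt12Aux.mapM g W₀ = V₁ :=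
          Submodule.eq_of_le_of_finrank_le ((hCmap g V₁).mp hg₁)
            (by rw [hr₁, Stmt12Aux.mapM_finrank hgu])
        have heq₂ : Stmt12Aux.mapM g W₀ = V₂ :=
          Submodule.eq_of_le_of_finrank_le ((hCmap g V₂).mp hg₂)
            (by rw [hr₂, Stmt12Aux.mapM_finrank hgu])
        exact hne' (heq₁ ▸ heq₂)
      have hCclosed : ∀ V ∈ F, IsClosed (C V) := by
        intro V _
        exact Stmt12Aux.isClosed_stab W₀ V
      have hpre : IsPreconnected (zc0 d Γ) := by
        rw [hzc0]
        exact isPreconnected_connectedComponentIn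
      have h1C : (1 : Matrix (Fin d) (Fin d) ℝ) ∈ C W₀ := by
        rw [hCmap, Stmt12Aux.mapM_one]
      have hfinal : zc0 d Γ ⊆ C W₀ :=
        Stmt12Aux.preconn_subset hpre F C hCclosed hcover hdisj h1z hW₀F h1C
      have := hIrr W₀ (fun g hg w hw => (hfinal hg) w hw)
      rcases this with h | h
      · exact hbot i₀ h
      · exact htop i₀ h
end

section
/- Let f_n = k_n a_n k'_n ∈ GL(d,ℝ) be a sequence written in polar (KAK) decomposition with k_n, k'_n orthogonal and a_n = diag(a_n^1 ≥ ... ≥ a_n^d > 0). Suppose a_n^i = o(a_n^1) for i > 1 and k'_n^{-1} e_1 → z (a unit vector). Then for every x ∈ ℝ^d, ‖f_n x‖/‖f_n‖ → |⟨z, x⟩| as n → ∞. -/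
/-!
Since `k n` is orthogonal, `‖f n x‖ / α n 0 = ‖(α n / α n 0) * (k' n x)‖`. The coordinates of
`k' n x` are bounded by `‖x‖`, so every coordinate except the first is killed by
`α n i / α n 0 → 0`, while the first one is `⟪(k' n)⁻¹ e₀, x⟫ → ⟪z, x⟫`.
-/

open Matrix Filter Topology RealInnerProductSpace

noncomputable def eu (d : ℕ) (x : Fin d → ℝ) : EuclideanSpace ℝ (Fin d) := WithLp.toLp 2 x

lemma norm_eu_mulVec_of_mem_orthogonalGroup {d : ℕ} {A : Matrix (Fin d) (Fin d) ℝ}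
    (hA : A ∈ orthogonalGroup (Fin d) ℝ) (v : Fin d → ℝ) :
    ‖eu d (A *ᵥ v)‖ = ‖eu d v‖ := by
  have hU : toEuclideanCLM (n := Fin d) (𝕜 := ℝ) A ∈
      unitary (EuclideanSpace ℝ (Fin d) →L[ℝ] EuclideanSpace ℝ (Fin d)) :=
    Unitary.map_mem toEuclideanCLM hA
  exact ContinuousLinearMap.norm_map_of_mem_unitary hU (eu d v)

lemma mulVec_apply_eq_inner_inv_mulVec_single {d : ℕ} {A : Matrix (Fin d) (Fin d) ℝ}
    (hA : A ∈ orthogonalGroup (Fin d) ℝ) (x : Fin d → ℝ) (i : Fin d) :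
    (A *ᵥ x) i = ⟪eu d (A⁻¹ *ᵥ Pi.single i 1), eu d x⟫ := by
  rw [eu, eu, EuclideanSpace.inner_toLp_toLp,
    inv_eq_left_inv ((mem_orthogonalGroup_iff' _ _).mp hA)]
  simp [mulVec, dotProduct_comm, Matrix.row]

lemma norm_eu_mulVec_diagonal_mulVec_div {d : ℕ} {k k' : Matrix (Fin d) (Fin d) ℝ}
    (hk : k ∈ orthogonalGroup (Fin d) ℝ) {a : Fin d → ℝ} {i₀ : Fin d} (ha : 0 < a i₀)
    (x : Fin d → ℝ) :
    ‖eu d ((k * diagonal a * k') *ᵥ x)‖ / a i₀ = ‖eu d (fun i => a i / a i₀ * (k' *ᵥ x) i)‖ := by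
  have hscale : eu d (fun i => a i / a i₀ * (k' *ᵥ x) i) =
      (a i₀)⁻¹ • eu d (diagonal a *ᵥ k' *ᵥ x) := by
    ext i
    simp only [eu, PiLp.smul_apply, smul_eq_mul, mulVec_diagonal]
    ring
  rw [← mulVec_mulVec, ← mulVec_mulVec, norm_eu_mulVec_of_mem_orthogonalGroup hk, hscale,
    norm_smul, Real.norm_of_nonneg (inv_nonneg.mpr ha.le), div_eq_inv_mul]

lemma tendsto_norm_of_tendsto_apply {ι β : Type*} [Fintype ι] [DecidableEq ι] {l : Filter β}
    {v : β → EuclideanSpace ℝ ι} {i₀ : ι} {t : ℝ}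
    (h₀ : Tendsto (fun n => v n i₀) l (𝓝 t)) (h : ∀ i ≠ i₀, Tendsto (fun n => v n i) l (𝓝 0)) :
    Tendsto (fun n => ‖v n‖) l (𝓝 |t|) := by
  have hv : Tendsto v l (𝓝 (EuclideanSpace.single i₀ t)) := by
    refine ((PiLp.continuous_toLp 2 _).tendsto _).comp (tendsto_pi_nhds.mpr fun i => ?_)
    by_cases hi : i = i₀
    · subst hi
      simpa using h₀
    · simpa [hi] using h i hi
  simpa using hv.norm

theorem stmt13_general (d : ℕ) (hd : 0 < d)
    (f k k' : ℕ → Matrix (Fin d) (Fin d) ℝ) (α : ℕ → Fin d → ℝ)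
    (hk : ∀ n, k n ∈ Matrix.orthogonalGroup (Fin d) ℝ)
    (hk' : ∀ n, k' n ∈ Matrix.orthogonalGroup (Fin d) ℝ)
    (hf : ∀ n, f n = k n * Matrix.diagonal (α n) * k' n)
    (hpos : ∀ n i, 0 < α n i)
    (hlittleo : ∀ i : Fin d, i ≠ ⟨0, hd⟩ →
      Tendsto (fun n => α n i / α n ⟨0, hd⟩) atTop (𝓝 0))
    (z : Fin d → ℝ)
    (hconv : Tendsto (fun n => eu d ((k' n)⁻¹.mulVec (Pi.single ⟨0, hd⟩ 1)))
      atTop (𝓝 (eu d z))) :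
    ∀ x : Fin d → ℝ,
      Tendsto (fun n => ‖eu d ((f n).mulVec x)‖ / α n ⟨0, hd⟩) atTop
        (𝓝 |⟪eu d z, eu d x⟫|) := by
  intro x
  simp_rw [hf, norm_eu_mulVec_diagonal_mulVec_div (hk _) (hpos _ _)]
  refine tendsto_norm_of_tendsto_apply (i₀ := ⟨0, hd⟩) ?_ fun i hi => ?_
  · simpa [eu, div_self (hpos _ _).ne', mulVec_apply_eq_inner_inv_mulVec_single (hk' _)]
      using hconv.inner tendsto_const_nhds
  · have hbound : ∀ n, ‖(k' n *ᵥ x) i‖ ≤ ‖eu d x‖ := fun n =>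
      (PiLp.norm_apply_le (eu d (k' n *ᵥ x)) i).trans
        (norm_eu_mulVec_of_mem_orthogonalGroup (hk' n) x).le
    simpa [eu] using (hlittleo i hi).zero_mul_isBoundedUnder_le
      (isBoundedUnder_of ⟨‖eu d x‖, hbound⟩)

/-- KAK (polar) decomposition asymptotics: if `f_n = k_n a_n k'_n` with `k_n, k'_n`
orthogonal and `a_n = diag(a_n^1 ≥ ... ≥ a_n^d > 0)` with `a_n^i = o(a_n^1)` for `i > 1`,
and `k'_n⁻¹ e_1 → z` (a unit vector), then `‖f_n x‖ / ‖f_n‖ → |⟨z, x⟩|` for every `x`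
(recall `‖f_n‖ = a_n^1`). -/
theorem stmt13 (d : ℕ) (hd : 0 < d)
    (f k k' : ℕ → Matrix (Fin d) (Fin d) ℝ) (α : ℕ → Fin d → ℝ)
    (hk : ∀ n, k n ∈ Matrix.orthogonalGroup (Fin d) ℝ)
    (hk' : ∀ n, k' n ∈ Matrix.orthogonalGroup (Fin d) ℝ)
    (hf : ∀ n, f n = k n * Matrix.diagonal (α n) * k' n)
    (hpos : ∀ n i, 0 < α n i)
    (hmono : ∀ n, ∀ i j : Fin d, i ≤ j → α n j ≤ α n i)
    (hlittleo : ∀ i : Fin d, i ≠ ⟨0, hd⟩ →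
      Tendsto (fun n => α n i / α n ⟨0, hd⟩) atTop (𝓝 0))
    (z : Fin d → ℝ) (hz : ‖eu d z‖ = 1)
    (hconv : Tendsto (fun n => eu d ((k' n)⁻¹.mulVec (Pi.single ⟨0, hd⟩ 1)))
      atTop (𝓝 (eu d z))) :
    ∀ x : Fin d → ℝ,
      Tendsto (fun n => ‖eu d ((f n).mulVec x)‖ / α n ⟨0, hd⟩) atTop
        (𝓝 |⟪eu d z, eu d x⟫|) :=
  stmt13_general d hd f k k' α hk hk' hf hpos hlittleo z hconv
end
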